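/- Let R be a unital *-ring and x = (x₁,…,xₙ) ∈ Rⁿ with Σᵢ xᵢ* xᵢ = -1. Define p ∈ Mₙ(R) by p_{ij} = -xᵢ xⱼ*. Then p is a projection in Mₙ(R) with the conjugate-transpose involution: p² = p and p* = p. If moreover Σᵢ xᵢ xᵢ* = -1, then Σ_{i,j} ε_{ij} p ε_{ij}* = 1 in Mₙ(R) (where ε_{ij} are the matrix units), so p is strictly full. -/

import Mathlib

open Matrix

/-- if `Σ xᵢ* xᵢ = -1`, the matrix `p` with entries `-xᵢ xⱼ*` is a
projection in `Mₙ(R)`; if moreover `Σ xᵢ xᵢ* = -1`, then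
`Σ_{i,j} ε_{ij} p ε_{ij}* = 1`, i.e. `p` is strictly full. -/
theorem proj_from_negative_solution {R : Type*} [Ring R] [StarRing R]
    (n : ℕ) (x : Fin n → R) (hx : ∑ i, star (x i) * x i = -1)
    (p : Matrix (Fin n) (Fin n) R) (hp : ∀ i j, p i j = -(x i * star (x j))) :
    p * p = p ∧ star p = p ∧
    ((∑ i, x i * star (x i) = -1) →
      ∑ i : Fin n, ∑ j : Fin n,
        single i j (1 : R) * p * star (single i j (1 : R)) = 1) := by
  refine ⟨?_, ?_, ?_⟩
  · ext i j
    simp only [mul_apply, hp, neg_mul_neg]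
    have key : ∀ k, x i * star (x k) * (x k * star (x j))
        = x i * ((star (x k) * x k) * star (x j)) := fun k => by noncomm_ring
    simp only [key, ← Finset.sum_mul, ← Finset.mul_sum, hx]
    noncomm_ring
  · ext i j
    simp [hp, Matrix.star_apply]
  · intro hx2
    ext a b
    simp only [Matrix.sum_apply, mul_apply, star_apply, single, of_apply,
      ite_mul, one_mul, zero_mul, mul_ite, mul_one, mul_zero,
      apply_ite (star (R := R)), star_one, star_zero, ite_and,
      Finset.sum_ite_eq, Finset.sum_ite_eq', Finset.mem_univ, if_true,
      Finset.sum_ite_irrel, Finset.sum_const_zero]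
    by_cases hab : a = b
    · subst hab
      simp only [if_true]
      simp [hp, hx2, one_apply]
    · simp [hab, Ne.symm hab]
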